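/- The round-trip 'symmetric lens → wide span of asymmetric lenses → symmetric lens' yields a lens isomorphic to the original: for any well-behaved symmetric lens ℓ, composing the span (ℓ_i^≼) of asymmetric lenses constructed from ℓ gives Σ^B_i ℓ_i^≼ ≅ ℓ. -/

import Mathlib

set_option autoImplicit false

/-- A model space: a category of models and updates, equipped with a relation `K`
of sequentially compatible consecutive updates, a class `D` of mergeable (concurrently
compatible) spans, and a merge operation. -/
structure ModelSpace where
  Obj : Type
  Hom : Obj → Obj → Type
  id : (A : Obj) → Hom A A
  comp : {A B C : Obj} → Hom A B → Hom B C → Hom A C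
  id_comp : ∀ {A B : Obj} (f : Hom A B), comp (id A) f = f
  comp_id : ∀ {A B : Obj} (f : Hom A B), comp f (id B) = f
  assoc : ∀ {A B C E : Obj} (f : Hom A B) (g : Hom B C) (h : Hom C E),
    comp (comp f g) h = comp f (comp g h)
  K : {X A Y : Obj} → Hom X A → Hom A Y → Prop
  D : {A A1 A2 : Obj} → Hom A A1 → Hom A A2 → Prop
  mergeObj : {A A1 A2 : Obj} → (u1 : Hom A A1) → (u2 : Hom A A2) → D u1 u2 → Obj
  merge1 : {A A1 A2 : Obj} → (u1 : Hom A A1) → (u2 : Hom A A2) → (h : D u1 u2) →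
    Hom A1 (mergeObj u1 u2 h)
  merge2 : {A A1 A2 : Obj} → (u1 : Hom A A1) → (u2 : Hom A A2) → (h : D u1 u2) →
    Hom A2 (mergeObj u1 u2 h)
  merge_comm : ∀ {A A1 A2 : Obj} (u1 : Hom A A1) (u2 : Hom A A2) (h : D u1 u2),
    comp u1 (merge1 u1 u2 h) = comp u2 (merge2 u1 u2 h)

/-- Transport an update along an equality of its source object. -/
def ModelSpace.castSrc (M : ModelSpace) {X Y T : M.Obj} (h : X = Y) (f : M.Hom X T) :
    M.Hom Y T := cast (congrArg (fun Z => M.Hom Z T) h) f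

/-- Transport an update along an equality of its target object. -/
def ModelSpace.castTgt (M : ModelSpace) {S T T' : M.Obj} (h : T = T') (f : M.Hom S T) :
    M.Hom S T' := cast (congrArg (fun Z => M.Hom S Z) h) f
/-- A multiary (symmetric) delta lens with amendment, over an index type `ι` of feet. -/
structure SymLens (ι : Type) where
  Sp : ι → ModelSpace
  Corr : Type
  bdry : (i : ι) → Corr → (Sp i).Obj
  ppgObj : (i : ι) → (R : Corr) → {A' : (Sp i).Obj} →
    (Sp i).Hom (bdry i R) A' → (j : ι) → (Sp j).Obj
  ppg : (i : ι) → (R : Corr) → {A' : (Sp i).Obj} →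
    (u : (Sp i).Hom (bdry i R) A') → (j : ι) → (h : j ≠ i) →
    (Sp j).Hom (bdry j R) (ppgObj i R u j)
  amend : (i : ι) → (R : Corr) → {A' : (Sp i).Obj} →
    (u : (Sp i).Hom (bdry i R) A') → (Sp i).Hom A' (ppgObj i R u i)
  ppgCorr : (i : ι) → (R : Corr) → {A' : (Sp i).Obj} →
    (Sp i).Hom (bdry i R) A' → Corr
  ppgCorr_bdry : ∀ (i : ι) (R : Corr) {A' : (Sp i).Obj}
    (u : (Sp i).Hom (bdry i R) A') (j : ι),
    bdry j (ppgCorr i R u) = ppgObj i R u j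
/-- Well-behavedness of a multiary lens: Stability and Reflect1-3. -/
structure SymLens.WellBehaved {ι : Type} (ℓ : SymLens ι) : Prop where
  stab_obj : ∀ (i : ι) (R : ℓ.Corr) (j : ι),
    ℓ.ppgObj i R ((ℓ.Sp i).id (ℓ.bdry i R)) j = ℓ.bdry j R
  stab_ppg : ∀ (i : ι) (R : ℓ.Corr) (j : ι) (h : j ≠ i),
    HEq (ℓ.ppg i R ((ℓ.Sp i).id (ℓ.bdry i R)) j h) ((ℓ.Sp j).id (ℓ.bdry j R))
  stab_amend : ∀ (i : ι) (R : ℓ.Corr),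
    HEq (ℓ.amend i R ((ℓ.Sp i).id (ℓ.bdry i R))) ((ℓ.Sp i).id (ℓ.bdry i R))
  stab_corr : ∀ (i : ι) (R : ℓ.Corr), ℓ.ppgCorr i R ((ℓ.Sp i).id (ℓ.bdry i R)) = R
  reflect1 : ∀ (i : ι) (R : ℓ.Corr) {A' : (ℓ.Sp i).Obj}
    (u : (ℓ.Sp i).Hom (ℓ.bdry i R) A'), (ℓ.Sp i).K u (ℓ.amend i R u)
  reflect2_obj : ∀ (i : ι) (R : ℓ.Corr) {A' : (ℓ.Sp i).Obj}
    (u : (ℓ.Sp i).Hom (ℓ.bdry i R) A') (j : ι), j ≠ i →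
    ℓ.ppgObj i R ((ℓ.Sp i).comp u (ℓ.amend i R u)) j = ℓ.ppgObj i R u j
  reflect2 : ∀ (i : ι) (R : ℓ.Corr) {A' : (ℓ.Sp i).Obj}
    (u : (ℓ.Sp i).Hom (ℓ.bdry i R) A') (j : ι) (h : j ≠ i),
    HEq (ℓ.ppg i R ((ℓ.Sp i).comp u (ℓ.amend i R u)) j h) (ℓ.ppg i R u j h)
  reflect3_obj : ∀ (i : ι) (R : ℓ.Corr) {A' : (ℓ.Sp i).Obj}
    (u : (ℓ.Sp i).Hom (ℓ.bdry i R) A'),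
    ℓ.ppgObj i R ((ℓ.Sp i).comp u (ℓ.amend i R u)) i = ℓ.ppgObj i R u i
  reflect3 : ∀ (i : ι) (R : ℓ.Corr) {A' : (ℓ.Sp i).Obj}
    (u : (ℓ.Sp i).Hom (ℓ.bdry i R) A'),
    HEq (ℓ.amend i R ((ℓ.Sp i).comp u (ℓ.amend i R u))) ((ℓ.Sp i).id (ℓ.ppgObj i R u i))
/-- An asymmetric lens with amendment: view space `A`, base space `B`,
a functorial `get`, and a `put` with view-side amendment. -/
structure ALens (A B : ModelSpace) where
  get : B.Obj → A.Obj
  getH : {X Y : B.Obj} → B.Hom X Y → A.Hom (get X) (get Y)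
  getH_id : ∀ (X : B.Obj), getH (B.id X) = A.id (get X)
  getH_comp : ∀ {X Y Z : B.Obj} (f : B.Hom X Y) (g : B.Hom Y Z),
    getH (B.comp f g) = A.comp (getH f) (getH g)
  putObj : (B0 : B.Obj) → {A' : A.Obj} → A.Hom (get B0) A' → B.Obj
  put : (B0 : B.Obj) → {A' : A.Obj} → (v : A.Hom (get B0) A') → B.Hom B0 (putObj B0 v)
  amendObj : (B0 : B.Obj) → {A' : A.Obj} → A.Hom (get B0) A' → A.Obj
  amend : (B0 : B.Obj) → {A' : A.Obj} → (v : A.Hom (get B0) A') → A.Hom A' (amendObj B0 v)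
/-- The space of consistent multimodels of a lens: objects are corrs, arrows are
tuple updates (no nontrivial merges). -/
def baseSpace {ι : Type} (ℓ : SymLens ι) : ModelSpace where
  Obj := ℓ.Corr
  Hom R R' := ∀ i, (ℓ.Sp i).Hom (ℓ.bdry i R) (ℓ.bdry i R')
  id R := fun i => (ℓ.Sp i).id (ℓ.bdry i R)
  comp f g := fun i => (ℓ.Sp i).comp (f i) (g i)
  id_comp f := funext fun i => (ℓ.Sp i).id_comp (f i)
  comp_id f := funext fun i => (ℓ.Sp i).comp_id (f i)
  assoc f g h := funext fun i => (ℓ.Sp i).assoc (f i) (g i) (h i)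
  K f g := ∀ i, (ℓ.Sp i).K (f i) (g i)
  D _ _ := False
  mergeObj _ _ h := h.elim
  merge1 _ _ h := h.elim
  merge2 _ _ h := h.elim
  merge_comm _ _ h := h.elim

/-- The asymmetric lens obtained from a symmetric lens `ℓ` at foot `i`:
the base is the space of `ℓ`'s consistent multimodels, `get` is projection,
and `put` propagates via `ℓ`. -/
def spanLens {ι : Type} [DecidableEq ι] (ℓ : SymLens ι) (i : ι) :
    ALens (ℓ.Sp i) (baseSpace ℓ) where
  get R := ℓ.bdry i R
  getH u := u i
  getH_id R := rfl
  getH_comp f g := rfl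
  putObj R {A'} v := ℓ.ppgCorr i R v
  put R {A'} v := fun j =>
    if h : j = i then
      (ℓ.Sp j).castTgt (ℓ.ppgCorr_bdry i R v j).symm
        (cast (congrArg (fun z => (ℓ.Sp z).Hom (ℓ.bdry z R) (ℓ.ppgObj i R v z)) h.symm)
          ((ℓ.Sp i).comp v (ℓ.amend i R v)))
    else (ℓ.Sp j).castTgt (ℓ.ppgCorr_bdry i R v j).symm (ℓ.ppg i R v j h)
  amendObj R {A'} v := ℓ.ppgObj i R v i
  amend R {A'} v := ℓ.amend i R v
/-- The symmetric `ι`-ary lens assembled from an `ι`-indexed span of asymmetric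
lenses with common base `Bsp`. Corrs are base models, with boundaries the `get` images. -/
def sigmaLens {ι : Type} [DecidableEq ι] {Asp : ι → ModelSpace} {Bsp : ModelSpace}
    (b : ∀ i, ALens (Asp i) Bsp)
    (hpg : ∀ (i : ι) (B0 : Bsp.Obj) {A' : (Asp i).Obj}
      (v : (Asp i).Hom ((b i).get B0) A'),
      (b i).get ((b i).putObj B0 v) = (b i).amendObj B0 v) :
    SymLens ι where
  Sp := Asp
  Corr := Bsp.Obj
  bdry := fun i B0 => (b i).get B0
  ppgObj := fun i B0 {A'} v j =>
    if h : j = i then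
      cast (congrArg (fun z => (Asp z).Obj) h.symm) ((b i).amendObj B0 v)
    else (b j).get ((b i).putObj B0 v)
  ppg := fun i B0 {A'} v j hj =>
    (Asp j).castTgt (dif_neg hj).symm ((b j).getH ((b i).put B0 v))
  amend := fun i B0 {A'} v =>
    (Asp i).castTgt (dif_pos rfl).symm ((b i).amend B0 v)
  ppgCorr := fun i B0 {A'} v => (b i).putObj B0 v
  ppgCorr_bdry := by
    intro i B0 A' v j
    by_cases h : j = i
    · subst h
      try dsimp only
      rw [dif_pos rfl]
      exact hpg j B0 v
    · try dsimp only
      rw [dif_neg h]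
/-- Isomorphism of model spaces (an isomorphism functor). -/
structure ModelSpace.Iso (M N : ModelSpace) where
  obj : M.Obj ≃ N.Obj
  hom : {A B : M.Obj} → M.Hom A B ≃ N.Hom (obj A) (obj B)
  map_id : ∀ (A : M.Obj), hom (M.id A) = N.id (obj A)
  map_comp : ∀ {A B C : M.Obj} (f : M.Hom A B) (g : M.Hom B C),
    hom (M.comp f g) = N.comp (hom f) (hom g)
/-- Isomorphism of lenses: isomorphic feet, a boundary-compatible bijection of
corrs, and commuting propagation operations. -/
structure SymLens.Iso {ι κ : Type} (ℓ : SymLens ι) (ℓ' : SymLens κ) where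
  idx : ι ≃ κ
  feet : ∀ i, ModelSpace.Iso (ℓ.Sp i) (ℓ'.Sp (idx i))
  corr : ℓ.Corr ≃ ℓ'.Corr
  bdry_comm : ∀ (i : ι) (R : ℓ.Corr),
    ℓ'.bdry (idx i) (corr R) = (feet i).obj (ℓ.bdry i R)
  ppg_comm : ∀ (i : ι) (R : ℓ.Corr) {A' : (ℓ.Sp i).Obj}
    (u : (ℓ.Sp i).Hom (ℓ.bdry i R) A') (j : ι) (hj : j ≠ i),
    HEq (ℓ'.ppg (idx i) (corr R)
          ((ℓ'.Sp (idx i)).castSrc (bdry_comm i R).symm ((feet i).hom u))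
          (idx j) (fun hh => hj (idx.injective hh)))
        ((feet j).hom (ℓ.ppg i R u j hj))
  amend_comm : ∀ (i : ι) (R : ℓ.Corr) {A' : (ℓ.Sp i).Obj}
    (u : (ℓ.Sp i).Hom (ℓ.bdry i R) A'),
    HEq (ℓ'.amend (idx i) (corr R)
          ((ℓ'.Sp (idx i)).castSrc (bdry_comm i R).symm ((feet i).hom u)))
        ((feet i).hom (ℓ.amend i R u))
  corr_comm : ∀ (i : ι) (R : ℓ.Corr) {A' : (ℓ.Sp i).Obj}
    (u : (ℓ.Sp i).Hom (ℓ.bdry i R) A'),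
    ℓ'.ppgCorr (idx i) (corr R)
        ((ℓ'.Sp (idx i)).castSrc (bdry_comm i R).symm ((feet i).hom u)) =
      corr (ℓ.ppgCorr i R u)

/-!
The round trip changes nothing but the packaging: its feet are those of `ℓ`, its corrs are
`ℓ`'s corrs (the objects of the base space), and boundaries, amendments and propagated
corrs are `ℓ`'s by construction. The propagated update at a foot `j ≠ i` is the `j`-th
component of the base update `put_i`, which `spanLens` defines as `ℓ`'s propagation
transported along `ppgCorr_bdry`. Hence identities form a lens isomorphism.
-/

def ModelSpace.Iso.refl (M : ModelSpace) : M.Iso M where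
  obj := Equiv.refl _
  hom := Equiv.refl _
  map_id _ := rfl
  map_comp _ _ := rfl

namespace SymLens

variable {ι : Type} [DecidableEq ι] (ℓ : SymLens ι)

abbrev spanSigma : SymLens ι :=
  sigmaLens (fun i => spanLens ℓ i) (fun i R {_} v => ℓ.ppgCorr_bdry i R v i)

theorem spanSigma_ppg_heq (i : ι) (R : ℓ.Corr) {A' : (ℓ.Sp i).Obj}
    (u : (ℓ.Sp i).Hom (ℓ.bdry i R) A') (j : ι) (hj : j ≠ i) :
    HEq ((spanSigma ℓ).ppg i R u j hj) (ℓ.ppg i R u j hj) := by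
  dsimp only [spanSigma, sigmaLens, spanLens, ModelSpace.castTgt]
  refine (cast_heq _ _).trans ?_
  rw [dif_neg hj]
  exact cast_heq _ _

theorem spanSigma_amend_heq (i : ι) (R : ℓ.Corr) {A' : (ℓ.Sp i).Obj}
    (u : (ℓ.Sp i).Hom (ℓ.bdry i R) A') :
    HEq ((spanSigma ℓ).amend i R u) (ℓ.amend i R u) :=
  cast_heq _ _

def spanSigmaIso : (spanSigma ℓ).Iso ℓ where
  idx := Equiv.refl ι
  feet i := ModelSpace.Iso.refl (ℓ.Sp i)
  corr := Equiv.refl _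
  bdry_comm _ _ := rfl
  ppg_comm i R _ u j hj := (spanSigma_ppg_heq ℓ i R u j hj).symm
  amend_comm i R _ u := (spanSigma_amend_heq ℓ i R u).symm
  corr_comm _ _ _ _ := rfl

end SymLens

theorem stmt18_general {ι : Type} [DecidableEq ι] (ℓ : SymLens ι) :
    Nonempty (SymLens.Iso
      (sigmaLens (fun i => spanLens ℓ i) (fun i R {A'} v => ℓ.ppgCorr_bdry i R v i))
      ℓ) :=
  ⟨ℓ.spanSigmaIso⟩

/-- The round-trip "symmetric lens → wide span of asymmetric
lenses → symmetric lens" yields a lens isomorphic to the original. -/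
theorem stmt18 {ι : Type} [DecidableEq ι] (ℓ : SymLens ι) (h : ℓ.WellBehaved) :
    Nonempty (SymLens.Iso
      (sigmaLens (fun i => spanLens ℓ i) (fun i R {A'} v => ℓ.ppgCorr_bdry i R v i))
      ℓ) :=
  stmt18_general ℓ
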